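/- Let V = Fin 4 with nodes v₁ = 0, v₂ = 1, v₃ = 2, v₄ = 3, edge set E = {(v₂,v₁), (v₂,v₃), (v₃,v₄)}, live-edge relation r relating exactly the pairs (v₂,v₁), (v₂,v₃) and (v₃,v₄), and activity strength A ≡ 1 on E. Then the activity function f_d satisfies f_d(∅) = 0, f_d({v₂}) = 3, f_d({v₃}) = 1 and f_d({v₂,v₃}) = 3; in particular f_d(∅ ∪ {v₂}) − f_d(∅) > f_d({v₃} ∪ {v₂}) − f_d({v₃}), so f_d is not supermodular. (The counterexample realization in the proof of Theorem 4.) -/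
import Mathlib


open Finset Classical

/-- Nodes reachable from some seed in `S` along the reflexive-transitive
closure of the live-edge relation `r`. -/
def reachable {V : Type*} (r : V → V → Prop) (S : Finset V) (v : V) : Prop :=
  ∃ s ∈ S, Relation.ReflTransGen r s v

/-- The per-realization activity benefit
`f_d(S) = Σ_{(u,v) ∈ E, u ∈ R(S), v ∈ R(S)} A(u,v)`. -/
noncomputable def activity {V : Type*} (r : V → V → Prop)
    (E : Finset (V × V)) (A : V × V → ℝ) (S : Finset V) : ℝ :=
  ∑ e ∈ E, if reachable r S e.1 ∧ reachable r S e.2 then A e else 0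

private def rr : Fin 4 → Fin 4 → Prop :=
  fun a b => (a = 1 ∧ b = 0) ∨ (a = 1 ∧ b = 2) ∨ (a = 2 ∧ b = 3)

private lemma from1 (v : Fin 4) : Relation.ReflTransGen rr 1 v := by
  fin_cases v
  · exact Relation.ReflTransGen.single (Or.inl ⟨rfl, rfl⟩)
  · exact Relation.ReflTransGen.refl
  · exact Relation.ReflTransGen.single (Or.inr (Or.inl ⟨rfl, rfl⟩))
  · exact Relation.ReflTransGen.tail
      (Relation.ReflTransGen.single (Or.inr (Or.inl ⟨rfl, rfl⟩)))
      (Or.inr (Or.inr ⟨rfl, rfl⟩))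

private lemma from2 (v : Fin 4) (h : Relation.ReflTransGen rr 2 v) :
    v = 2 ∨ v = 3 := by
  induction h with
  | refl => exact Or.inl rfl
  | tail _ hstep ih =>
      rcases ih with h2 | h3
      · subst h2
        rcases hstep with ⟨h, _⟩ | ⟨h, _⟩ | ⟨_, h⟩
        · exact absurd h (by decide)
        · exact absurd h (by decide)
        · exact Or.inr h
      · subst h3
        rcases hstep with ⟨h, _⟩ | ⟨h, _⟩ | ⟨h, _⟩ <;> exact absurd h (by decide)

private lemma reach1 (v : Fin 4) : reachable rr {1} v :=
  ⟨1, by simp, from1 v⟩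

private lemma reach12 (v : Fin 4) : reachable rr {1, 2} v :=
  ⟨1, by simp, from1 v⟩

private lemma reach2 (v : Fin 4) : reachable rr {2} v ↔ (v = 2 ∨ v = 3) := by
  constructor
  · rintro ⟨s, hs, h⟩
    simp only [Finset.mem_singleton] at hs
    subst hs
    exact from2 v h
  · rintro (rfl | rfl)
    · exact ⟨2, by simp, Relation.ReflTransGen.refl⟩
    · exact ⟨2, by simp, Relation.ReflTransGen.single (Or.inr (Or.inr ⟨rfl, rfl⟩))⟩

private lemma reach_empty (v : Fin 4) : ¬ reachable rr ∅ v := by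
  rintro ⟨s, hs, _⟩; simp at hs

/-- The counterexample realization in the proof of Theorem 4: on `V = Fin 4`
with edges `E = {(v₂,v₁), (v₂,v₃), (v₃,v₄)}`, all of them live, and unit
activity strengths, the activity function `f_d` satisfies `f_d(∅) = 0`,
`f_d({v₂}) = 3`, `f_d({v₃}) = 1`, `f_d({v₂,v₃}) = 3`; in particular
`f_d(∅ ∪ {v₂}) − f_d(∅) > f_d({v₃} ∪ {v₂}) − f_d({v₃})`, so `f_d` is not
supermodular. -/
theorem activity_not_supermodular :
    let r : Fin 4 → Fin 4 → Prop :=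
      fun a b => (a = 1 ∧ b = 0) ∨ (a = 1 ∧ b = 2) ∨ (a = 2 ∧ b = 3)
    let E : Finset (Fin 4 × Fin 4) := {(1, 0), (1, 2), (2, 3)}
    let A : Fin 4 × Fin 4 → ℝ := fun _ => 1
    activity r E A ∅ = 0 ∧
      activity r E A {1} = 3 ∧
      activity r E A {2} = 1 ∧
      activity r E A {1, 2} = 3 ∧
      activity r E A (∅ ∪ {1}) - activity r E A ∅ >
        activity r E A ({2} ∪ {1}) - activity r E A {2} ∧
      ¬ (∀ S T : Finset (Fin 4), S ⊆ T → ∀ u : Fin 4, u ∉ T →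
          activity r E A (insert u S) - activity r E A S ≤
            activity r E A (insert u T) - activity r E A T) := by
  intro r E A
  have hr : r = rr := rfl
  have hE : E = {(1, 0), (1, 2), (2, 3)} := rfl
  have h0 : activity r E A ∅ = 0 := by
    rw [hr, hE]
    simp [activity, reach_empty]
  have h1 : activity r E A {1} = 3 := by
    rw [hr, hE]
    unfold activity
    rw [Finset.sum_insert (by decide), Finset.sum_insert (by decide),
      Finset.sum_singleton]
    simp [reach1, A]
    norm_num
  have h12 : activity r E A {1, 2} = 3 := by
    rw [hr, hE]
    unfold activity
    rw [Finset.sum_insert (by decide), Finset.sum_insert (by decide),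
      Finset.sum_singleton]
    simp [reach12, A]
    norm_num
  have h2 : activity r E A {2} = 1 := by
    rw [hr, hE]
    unfold activity
    rw [Finset.sum_insert (by decide), Finset.sum_insert (by decide),
      Finset.sum_singleton]
    simp [reach2, A]
  have hu1 : (∅ ∪ ({1} : Finset (Fin 4))) = {1} := by simp
  have hu2 : (({2} : Finset (Fin 4)) ∪ {1}) = {1, 2} := by decide
  have hkey : activity r E A (∅ ∪ {1}) - activity r E A ∅ >
      activity r E A ({2} ∪ {1}) - activity r E A {2} := by
    rw [hu1, hu2, h0, h1, h2, h12]; norm_num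
  refine ⟨h0, h1, h2, h12, hkey, ?_⟩
  intro h
  have := h ∅ {2} (by simp) 1 (by decide)
  rw [show insert (1 : Fin 4) (∅ : Finset (Fin 4)) = {1} from rfl,
    show insert (1 : Fin 4) ({2} : Finset (Fin 4)) = {1, 2} by decide,
    h0, h1, h2, h12] at this
  norm_num at this
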